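/- Let $(\Omega,\mathcal{F},\mathbb{P})$ be a probability space, $H$ a nonempty finite index set, and $F : H \to \mathbb{R}$ a fixed vector. Let $(g_j)_{j \in H}$ be real-valued random variables on $\Omega$ such that each $g_j$ takes values in $\{-1,1\}$ with $\mathbb{P}(g_j = 1) = \mathbb{P}(g_j = -1) = 1/2$, and such that the family $(g_j)_{j\in H}$ is $4$-wise independent, i.e. for every subset $S \subseteq H$ with $|S| \le 4$ the variables $(g_j)_{j \in S}$ are mutually independent. Define $X = \sum_{j\in H} F(j)\, g_j$ and $F_2 = \sum_{j\in H} F(j)^2$. Then $\operatorname{Var}(X^2) = \mathbb{E}[X^4] - (\mathbb{E}[X^2])^2 \le 2 F_2^2$. -/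

import Mathlib

/-!
Since `g j ^ 2 = 1`, `X ^ 2 = F₂ + Y` with `Y = ∑_{i ≠ j} F i F j g i g j`, so
`Var(X²) = Var(Y) ≤ E[Y²]`. For `i ≠ j` and `k ≠ l` the product `g i g j g k g l` is the product
of `g` over the symmetric difference `{i, j} ∆ {k, l}`, a set of at most four indices; by 4-wise
independence and `E[g] = 0` its mean is `1` when `(k, l)` is `(i, j)` or `(j, i)` and `0`
otherwise. Hence `E[Y²] = 2 ∑_{i ≠ j} F i² F j² ≤ 2 F₂²`.
-/

open MeasureTheory ProbabilityTheory
open scoped symmDiff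

namespace Finset

theorem prod_mul_prod_eq_prod_symmDiff {ι M : Type*} [CommMonoid M] [DecidableEq ι]
    {f : ι → M} (hf : ∀ i, f i * f i = 1) (s t : Finset ι) :
    (∏ i ∈ s, f i) * ∏ i ∈ t, f i = ∏ i ∈ s ∆ t, f i := by
  have hinter : (∏ i ∈ s ∩ t, f i) * ∏ i ∈ s ∩ t, f i = 1 := by
    rw [← prod_mul_distrib, prod_eq_one fun i _ => hf i]
  rw [← prod_union_inter, ← prod_sdiff inter_subset_union, mul_assoc, hinter, mul_one,
    symmDiff_eq_sup_sdiff_inf]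
  rfl

theorem sq_sum_eq_sum_sq_add_sum_offDiag {ι R : Type*} [CommSemiring R] [DecidableEq ι]
    (s : Finset ι) (a : ι → R) :
    (∑ i ∈ s, a i) ^ 2 = ∑ i ∈ s, a i ^ 2 + ∑ p ∈ s.offDiag, a p.1 * a p.2 := by
  rw [sq, sum_mul_sum, ← sum_product', ← diag_union_offDiag,
    sum_union (disjoint_diag_offDiag s), sum_diag]
  simp only [sq]

theorem sum_offDiag_mul_sq_le_sq_sum_sq {ι : Type*} [DecidableEq ι] (s : Finset ι)
    (a : ι → ℝ) : ∑ p ∈ s.offDiag, (a p.1 * a p.2) ^ 2 ≤ (∑ i ∈ s, a i ^ 2) ^ 2 := by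
  rw [s.sq_sum_eq_sum_sq_add_sum_offDiag]
  simp only [mul_pow]
  linarith [s.sum_nonneg fun i _ => sq_nonneg (a i ^ 2)]

theorem pair_eq_pair_iff {α : Type*} [DecidableEq α] {a b c d : α} :
    ({a, b} : Finset α) = {c, d} ↔ a = c ∧ b = d ∨ a = d ∧ b = c := by
  rw [← coe_inj, coe_pair, coe_pair, Set.pair_eq_pair_iff]

end Finset

theorem sq_sum_mul_eq_sum_offDiag_add {H : Type*} [Fintype H] [DecidableEq H] (F g : H → ℝ)
    (hsq : ∀ j, g j * g j = 1) :
    (∑ j, F j * g j) ^ 2 =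
      ∑ p ∈ Finset.univ.offDiag, F p.1 * F p.2 * (g p.1 * g p.2) + ∑ j, F j ^ 2 := by
  rw [Finset.sq_sum_eq_sum_sq_add_sum_offDiag, add_comm]
  congr 1
  · exact Finset.sum_congr rfl fun p _ => by ring
  · exact Finset.sum_congr rfl fun j _ => by rw [mul_pow, sq (g j), hsq, mul_one]

section

variable {Ω : Type*} [MeasurableSpace Ω] {μ : Measure Ω}

theorem memLp_top_of_mul_self_eq_one {f : Ω → ℝ} (hf : AEStronglyMeasurable f μ)
    (h : ∀ ω, f ω * f ω = 1) : MemLp f ⊤ μ :=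
  memLp_top_of_bound hf 1 <| ae_of_all _ fun ω => abs_le_one_iff_mul_self_le_one.mpr (h ω).le

theorem integral_eq_zero_of_eq_one_or_eq_neg_one [IsProbabilityMeasure μ] {f : Ω → ℝ}
    (hf : Measurable f) (hval : ∀ ω, f ω = 1 ∨ f ω = -1) (h1 : μ {ω | f ω = 1} = 1 / 2) :
    ∫ ω, f ω ∂μ = 0 := by
  have hset : MeasurableSet {ω | f ω = 1} := hf (measurableSet_singleton 1)
  have hind : f = fun ω => Set.indicator {ω | f ω = 1} (fun _ => (2 : ℝ)) ω - 1 := by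
    funext ω
    rcases hval ω with h | h
    · rw [h, Set.indicator_of_mem (by exact h)]; norm_num
    · rw [h, Set.indicator_of_notMem (by norm_num [h])]; norm_num
  rw [hind, integral_sub ((integrable_const 2).indicator hset) (integrable_const 1),
    integral_indicator_const _ hset, measureReal_def, h1]
  simp

theorem integral_sq_finsetSum_mul {ι : Type*} (s : Finset ι) (c : ι → ℝ) (h : ι → Ω → ℝ)
    (hint : ∀ i ∈ s, ∀ j ∈ s, Integrable (fun ω => h i ω * h j ω) μ) :
    ∫ ω, (∑ i ∈ s, c i * h i ω) ^ 2 ∂μ =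
      ∑ i ∈ s, ∑ j ∈ s, c i * c j * ∫ ω, h i ω * h j ω ∂μ := by
  have hexp : ∀ ω, (∑ i ∈ s, c i * h i ω) ^ 2 =
      ∑ i ∈ s, ∑ j ∈ s, c i * c j * (h i ω * h j ω) := fun ω => by
    rw [sq, Finset.sum_mul_sum]
    exact Finset.sum_congr rfl fun i _ => Finset.sum_congr rfl fun j _ => by ring
  simp_rw [hexp]
  rw [integral_finsetSum _ fun i hi => integrable_finsetSum _ fun j hj =>
    (hint i hi j hj).const_mul _]
  refine Finset.sum_congr rfl fun i hi => ?_
  rw [integral_finsetSum _ fun j hj => (hint i hi j hj).const_mul _]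
  exact Finset.sum_congr rfl fun j _ => integral_const_mul _ _

variable {H : Type*} {g : H → Ω → ℝ}

theorem integral_finsetProd_eq_ite_of_iIndepFun [DecidableEq H] {S : Finset H}
    (hind : iIndepFun (fun j : S => g j) μ) (hmeas : ∀ j, AEStronglyMeasurable (g j) μ)
    (hmean : ∀ j, ∫ ω, g j ω ∂μ = 0) :
    ∫ ω, ∏ j ∈ S, g j ω ∂μ = if S = ∅ then 1 else 0 := by
  simp_rw [← S.prod_coe_sort]
  rw [hind.integral_fun_prod_eq_prod_integral fun j => hmeas j]
  rcases S.eq_empty_or_nonempty with rfl | ⟨j, hj⟩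
  · simp
  · rw [if_neg (Finset.ne_empty_of_mem hj)]
    exact Finset.prod_eq_zero (Finset.mem_univ ⟨j, hj⟩) (hmean j)

theorem integral_pair_mul_pair_eq [DecidableEq H] (hmeas : ∀ j, AEStronglyMeasurable (g j) μ)
    (hsq : ∀ j ω, g j ω * g j ω = 1) (hmean : ∀ j, ∫ ω, g j ω ∂μ = 0)
    (hindep : ∀ S : Finset H, S.card ≤ 4 → iIndepFun (fun j : S => g j) μ)
    {p q : H × H} (hp : p.1 ≠ p.2) (hq : q.1 ≠ q.2) :
    ∫ ω, g p.1 ω * g p.2 ω * (g q.1 ω * g q.2 ω) ∂μ =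
      (if q = p then 1 else 0) + (if q = p.swap then 1 else 0) := by
  have hprod : ∀ ω, g p.1 ω * g p.2 ω * (g q.1 ω * g q.2 ω) =
      ∏ j ∈ {p.1, p.2} ∆ {q.1, q.2}, g j ω := fun ω => by
    rw [← Finset.prod_mul_prod_eq_prod_symmDiff (hsq · ω), Finset.prod_pair hp,
      Finset.prod_pair hq]
  have hcard : ({p.1, p.2} ∆ {q.1, q.2} : Finset H).card ≤ 4 :=
    (Finset.card_le_card symmDiff_le_sup).trans <| (Finset.card_union_le _ _).trans <|
      add_le_add Finset.card_le_two Finset.card_le_two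
  simp_rw [hprod]
  rw [integral_finsetProd_eq_ite_of_iIndepFun (hindep _ hcard) hmeas hmean]
  simp only [Finset.symmDiff_eq_empty, Finset.pair_eq_pair_iff]
  grind

theorem integral_sq_sum_offDiag [IsFiniteMeasure μ] [Fintype H] [DecidableEq H]
    (hmeas : ∀ j, AEStronglyMeasurable (g j) μ) (hsq : ∀ j ω, g j ω * g j ω = 1)
    (hmean : ∀ j, ∫ ω, g j ω ∂μ = 0)
    (hindep : ∀ S : Finset H, S.card ≤ 4 → iIndepFun (fun j : S => g j) μ) (F : H → ℝ) :
    ∫ ω, (∑ p ∈ Finset.univ.offDiag, F p.1 * F p.2 * (g p.1 ω * g p.2 ω)) ^ 2 ∂μ =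
      2 * ∑ p ∈ Finset.univ.offDiag, (F p.1 * F p.2) ^ 2 := by
  have hpairLp : ∀ p : H × H, MemLp (fun ω => g p.1 ω * g p.2 ω) ⊤ μ := fun p =>
    (memLp_top_of_mul_self_eq_one (hmeas p.2) (hsq p.2)).mul'
      (memLp_top_of_mul_self_eq_one (hmeas p.1) (hsq p.1))
  rw [integral_sq_finsetSum_mul _ _ _ fun p _ q _ =>
    ((hpairLp q).mul' (hpairLp p)).integrable le_top, Finset.mul_sum]
  refine Finset.sum_congr rfl fun p hp => ?_
  have hswap : p.swap ∈ Finset.univ.offDiag := Finset.mem_offDiag.mpr ⟨by simp, by simp, by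
    simpa [eq_comm] using (Finset.mem_offDiag.mp hp).2.2⟩
  rw [Finset.sum_congr rfl fun q hq => by
    rw [integral_pair_mul_pair_eq hmeas hsq hmean hindep (Finset.mem_offDiag.mp hp).2.2
      (Finset.mem_offDiag.mp hq).2.2]]
  simp only [mul_add, mul_ite, mul_one, mul_zero, Finset.sum_add_distrib, Finset.sum_ite_eq', hp,
    hswap, if_true, Prod.fst_swap, Prod.snd_swap]
  ring

end

theorem ams_sketch_variance_bound_general
    {Ω : Type*} [MeasurableSpace Ω] (μ : Measure Ω) [IsProbabilityMeasure μ]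
    {H : Type*} [Fintype H] (F : H → ℝ) (g : H → Ω → ℝ)
    (hmeas : ∀ j, Measurable (g j))
    (hval : ∀ j ω, g j ω = 1 ∨ g j ω = -1)
    (hp1 : ∀ j, μ {ω | g j ω = 1} = 1 / 2)
    (hindep : ∀ S : Finset H, S.card ≤ 4 →
      iIndepFun
        (fun j : S => g (j : H)) μ) :
    variance (fun ω => (∑ j, F j * g j ω) ^ 2) μ =
        ∫ ω, (∑ j, F j * g j ω) ^ 4 ∂μ - (∫ ω, (∑ j, F j * g j ω) ^ 2 ∂μ) ^ 2 ∧
      variance (fun ω => (∑ j, F j * g j ω) ^ 2) μ ≤ 2 * (∑ j, (F j) ^ 2) ^ 2 := by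
  classical
  have hsq : ∀ j ω, g j ω * g j ω = 1 := fun j ω => mul_self_eq_one_iff.mpr (hval j ω)
  have hmean : ∀ j, ∫ ω, g j ω ∂μ = 0 := fun j =>
    integral_eq_zero_of_eq_one_or_eq_neg_one (hmeas j) (hval j) (hp1 j)
  have hX : MemLp (fun ω => ∑ j, F j * g j ω) ⊤ μ := memLp_finsetSum _ fun j _ =>
    (memLp_top_of_mul_self_eq_one (hmeas j).aestronglyMeasurable (hsq j)).const_mul (F j)
  have hX2 : MemLp (fun ω => (∑ j, F j * g j ω) ^ 2) 2 μ := by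
    simp_rw [sq]
    exact (hX.mul hX).mono_exponent le_top
  set Y := fun ω => ∑ p ∈ Finset.univ.offDiag, F p.1 * F p.2 * (g p.1 ω * g p.2 ω)
  have hY : AEStronglyMeasurable Y μ := by fun_prop
  refine ⟨by rw [variance_eq_sub hX2]; simp [← pow_mul], ?_⟩
  calc variance (fun ω => (∑ j, F j * g j ω) ^ 2) μ
      = variance Y μ := by
        simp_rw [sq_sum_mul_eq_sum_offDiag_add F (g · _) (hsq · _)]
        exact variance_add_const hY _
    _ ≤ ∫ ω, Y ω ^ 2 ∂μ := variance_le_expectation_sq hY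
    _ = 2 * ∑ p ∈ Finset.univ.offDiag, (F p.1 * F p.2) ^ 2 :=
        integral_sq_sum_offDiag (fun j => (hmeas j).aestronglyMeasurable) hsq hmean hindep F
    _ ≤ 2 * (∑ j, F j ^ 2) ^ 2 := by
        gcongr
        exact Finset.univ.sum_offDiag_mul_sq_le_sq_sum_sq F

/-- **Lemma 2 (variance bound for the AMS sketch).** If `(g j)` are 4-wise independent
Rademacher random variables and `X = ∑ j, F j * g j`, `F₂ = ∑ j, F j ^ 2`, then
`Var(X²) = E[X⁴] - (E[X²])² ≤ 2 F₂²`. -/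
theorem ams_sketch_variance_bound
    {Ω : Type*} [MeasurableSpace Ω] (μ : Measure Ω) [IsProbabilityMeasure μ]
    {H : Type*} [Fintype H] [Nonempty H] (F : H → ℝ) (g : H → Ω → ℝ)
    (hmeas : ∀ j, Measurable (g j))
    (hval : ∀ j ω, g j ω = 1 ∨ g j ω = -1)
    (hp1 : ∀ j, μ {ω | g j ω = 1} = 1 / 2)
    (hpm1 : ∀ j, μ {ω | g j ω = -1} = 1 / 2)
    (hindep : ∀ S : Finset H, S.card ≤ 4 →
      iIndepFun
        (fun j : S => g (j : H)) μ) :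
    variance (fun ω => (∑ j, F j * g j ω) ^ 2) μ =
        ∫ ω, (∑ j, F j * g j ω) ^ 4 ∂μ - (∫ ω, (∑ j, F j * g j ω) ^ 2 ∂μ) ^ 2 ∧
      variance (fun ω => (∑ j, F j * g j ω) ^ 2) μ ≤ 2 * (∑ j, (F j) ^ 2) ^ 2 :=
  ams_sketch_variance_bound_general μ F g hmeas hval hp1 hindep
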